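/- Let {B i j} be a non-degenerate LSSD(v,k,λ;w) with natural-number parameters, w ≥ 3, μ > ν, and 1 < k < v−1, and suppose the Krein/Noda bound is tight: (w−1)·(2k−v) = (v−2)·(μ−ν). Then 4·(k−λ) ≤ v and v ≤ 2k. -/

import Mathlib

/-!
Multiplying the defining identities by the all-ones matrix `J` gives the design relation
`k² = (k - λ) + λv` and the linking relation `k² = νv + (μ - ν)k`, and expanding
`B₁₂ B₂₃ B₃₂ B₂₁` in two ways gives `k - λ = s²` with `s = μ - ν`. Tightness forces `2k - v > 0`.
For a symmetric design `(2k - v)² = v² - 4(k - λ)(v - 1)`, so `4s² > v` would give `2k - v = 1`,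
`v = 4s² - 1`, `k = 2s²`; the linking relation then reads `ν(2s + 1) = 2s³`, and since
`8s³ ≡ -1 (mod 2s + 1)` this forces `2s + 1 ∣ 1`, impossible for `s ≥ 1`.
-/

open Matrix

/-- The all-ones `v × v` real matrix. -/
def J (v : ℕ) : Matrix (Fin v) (Fin v) ℝ := Matrix.of fun _ _ => 1

/-- A linked system of symmetric designs `LSSD(v,k,λ;w)` with linking parameters `μ, ν`. -/
def IsLSSD (v w : ℕ) (k lam mu nu : ℝ)
    (B : Fin w → Fin w → Matrix (Fin v) (Fin v) ℝ) : Prop :=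
  (∀ i j : Fin w, i ≠ j → ∀ a b : Fin v, B i j a b = 0 ∨ B i j a b = 1) ∧
  (∀ i j : Fin w, i ≠ j → B j i = (B i j)ᵀ) ∧
  (∀ i j : Fin w, i ≠ j →
    B i j * (B i j)ᵀ = (k - lam) • (1 : Matrix (Fin v) (Fin v) ℝ) + lam • J v ∧
    (B i j)ᵀ * B i j = (k - lam) • (1 : Matrix (Fin v) (Fin v) ℝ) + lam • J v) ∧
  (∀ h i j : Fin w, h ≠ i → h ≠ j → i ≠ j →
    B i h * B h j = nu • J v + (mu - nu) • B i j)

section AllOnes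

variable {v : ℕ}

@[simp]
lemma J_apply (a b : Fin v) : J v a b = 1 := rfl

lemma J_mul_J : J v * J v = (v : ℝ) • J v := by
  ext a b
  simp [mul_apply]

lemma transpose_J : (J v)ᵀ = J v := rfl

lemma eq_of_smul_J_eq (hv : 0 < v) {a b : ℝ} (h : a • J v = b • J v) : a = b := by
  simpa using congrFun (congrFun h ⟨0, hv⟩) ⟨0, hv⟩

lemma eq_of_smul_one_add_smul_J_eq (hv : 1 < v) {a b a' b' : ℝ}
    (h : a • (1 : Matrix (Fin v) (Fin v) ℝ) + b • J v = a' • 1 + b' • J v) : a = a' := by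
  have hne : (⟨0, by omega⟩ : Fin v) ≠ ⟨1, hv⟩ := by simp
  have hdiag := congrFun (congrFun h ⟨0, by omega⟩) ⟨0, by omega⟩
  have hoff := congrFun (congrFun h ⟨0, by omega⟩) ⟨1, hv⟩
  simp only [Matrix.add_apply, Matrix.smul_apply, one_apply_eq, one_apply_ne hne, smul_eq_mul,
    J_apply] at hdiag hoff
  linarith

lemma mul_J_of_mul_transpose_eq {A : Matrix (Fin v) (Fin v) ℝ} {k lam : ℝ}
    (h01 : ∀ a b, A a b = 0 ∨ A a b = 1)
    (hA : A * Aᵀ = (k - lam) • (1 : Matrix (Fin v) (Fin v) ℝ) + lam • J v) :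
    A * J v = k • J v := by
  have hrow : ∀ a, ∑ c, A a c = k := fun a => by
    have hdiag := congrFun (congrFun hA a) a
    simp only [mul_apply, transpose_apply, Matrix.add_apply, Matrix.smul_apply, one_apply_eq,
      smul_eq_mul, mul_one, J_apply] at hdiag
    -- the diagonal of `A Aᵀ` holds the row sums, as `0/1` entries are idempotent
    have hidem : ∀ c, A a c * A a c = A a c := fun c => by
      rcases h01 a c with h | h <;> simp [h]
    simp only [hidem] at hdiag
    linarith
  ext a b
  simp [mul_apply, hrow a]

end AllOnes

namespace IsLSSD

variable {v w : ℕ} {k lam mu nu : ℝ} {B : Fin w → Fin w → Matrix (Fin v) (Fin v) ℝ}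
  {h i j : Fin w}

lemma mul_transpose_eq (hB : IsLSSD v w k lam mu nu B) (hij : i ≠ j) :
    B i j * (B i j)ᵀ = (k - lam) • (1 : Matrix (Fin v) (Fin v) ℝ) + lam • J v :=
  (hB.2.2.1 i j hij).1

lemma mul_swap_eq (hB : IsLSSD v w k lam mu nu B) (hij : i ≠ j) :
    B i j * B j i = (k - lam) • (1 : Matrix (Fin v) (Fin v) ℝ) + lam • J v := by
  rw [hB.2.1 i j hij, hB.mul_transpose_eq hij]

lemma mul_J (hB : IsLSSD v w k lam mu nu B) (hij : i ≠ j) : B i j * J v = k • J v :=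
  mul_J_of_mul_transpose_eq (hB.1 i j hij) (hB.mul_transpose_eq hij)

lemma J_mul (hB : IsLSSD v w k lam mu nu B) (hij : i ≠ j) : J v * B i j = k • J v := by
  have h := congrArg transpose (hB.mul_J hij.symm)
  rwa [transpose_mul, transpose_smul, transpose_J, ← hB.2.1 j i hij.symm] at h

lemma linking (hB : IsLSSD v w k lam mu nu B) (hhi : h ≠ i) (hhj : h ≠ j) (hij : i ≠ j) :
    B i h * B h j = nu • J v + (mu - nu) • B i j :=
  hB.2.2.2 h i j hhi hhj hij

lemma design_eq (hB : IsLSSD v w k lam mu nu B) (hij : i ≠ j) (hv : 0 < v) :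
    k * k = (k - lam) + lam * v := by
  have hJ : (k * k) • J v = ((k - lam) + lam * v) • J v := by
    calc (k * k) • J v = B i j * ((B i j)ᵀ * J v) := by
          rw [← hB.2.1 i j hij, hB.mul_J hij.symm, Matrix.mul_smul, hB.mul_J hij, smul_smul]
      _ = ((k - lam) • 1 + lam • J v) * J v := by
          rw [← Matrix.mul_assoc, hB.mul_transpose_eq hij]
      _ = ((k - lam) + lam * v) • J v := by
          rw [add_mul, smul_mul, smul_mul, Matrix.one_mul, J_mul_J, smul_smul, ← add_smul]
  exact eq_of_smul_J_eq hv hJ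

lemma linking_eq (hB : IsLSSD v w k lam mu nu B) (hhi : h ≠ i) (hhj : h ≠ j) (hij : i ≠ j)
    (hv : 0 < v) : k * k = nu * v + (mu - nu) * k := by
  have hJ : (k * k) • J v = (nu * v + (mu - nu) * k) • J v := by
    calc (k * k) • J v = B i h * (B h j * J v) := by
          rw [hB.mul_J hhj, Matrix.mul_smul, hB.mul_J hhi.symm, smul_smul]
      _ = (nu • J v + (mu - nu) • B i j) * J v := by
          rw [← Matrix.mul_assoc, hB.linking hhi hhj hij]
      _ = (nu * v + (mu - nu) * k) • J v := by
          rw [add_mul, smul_mul, smul_mul, J_mul_J, hB.mul_J hij, smul_smul, smul_smul, ← add_smul]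
  exact eq_of_smul_J_eq hv hJ

/-- The coefficient of `I` in `B_ih B_hj B_jh B_hi`, computed by pairing the middle factors or
the outer ones. -/
lemma sub_sq_eq (hB : IsLSSD v w k lam mu nu B) (hhi : h ≠ i) (hhj : h ≠ j) (hij : i ≠ j)
    (hv : 1 < v) : (k - lam) ^ 2 = (mu - nu) ^ 2 * (k - lam) := by
  have hinner : B i h * (B h j * B j h) * B h i
      = (k - lam) ^ 2 • (1 : Matrix (Fin v) (Fin v) ℝ)
        + ((k - lam) * lam + lam * (k * k)) • J v := by
    rw [hB.mul_swap_eq hhj, mul_add, Matrix.mul_smul, Matrix.mul_smul, Matrix.mul_one, add_mul,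
      smul_mul, smul_mul, hB.mul_swap_eq hhi.symm, hB.mul_J hhi.symm, smul_mul, hB.J_mul hhi]
    simp only [smul_add, smul_smul]
    module
  have houter : (B i h * B h j) * (B j h * B h i)
      = ((mu - nu) ^ 2 * (k - lam)) • (1 : Matrix (Fin v) (Fin v) ℝ)
        + (nu * nu * v + 2 * (nu * (mu - nu) * k) + (mu - nu) ^ 2 * lam) • J v := by
    rw [hB.linking hhi hhj hij, hB.linking hhj hhi hij.symm]
    simp only [add_mul, mul_add, smul_mul, Matrix.mul_smul, J_mul_J, hB.J_mul hij.symm,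
      hB.mul_J hij, hB.mul_swap_eq hij, smul_add, smul_smul]
    module
  refine eq_of_smul_one_add_smul_J_eq hv (hinner.symm.trans (Eq.trans ?_ houter))
  simp only [Matrix.mul_assoc]

end IsLSSD

lemma sub_ne_zero_of_design_eq {v k lam : ℤ} (hk : 0 < k) (hkv : k < v)
    (hdesign : k * k = (k - lam) + lam * v) : k - lam ≠ 0 := by
  intro h
  have : k * (k - v) = 0 := by linear_combination hdesign + (1 - v) * h
  rcases mul_eq_zero.mp this with h | h <;> omega

lemma two_mul_sub_sq_of_design_eq {R : Type*} [CommRing R] {v k lam : R}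
    (hdesign : k * k = (k - lam) + lam * v) :
    (2 * k - v) ^ 2 = v ^ 2 - 4 * (k - lam) * (v - 1) := by
  linear_combination 4 * hdesign

lemma two_mul_add_one_dvd_one {s nu : ℤ}
    (hlink : (2 * s ^ 2) * (2 * s ^ 2) = nu * (4 * s ^ 2 - 1) + s * (2 * s ^ 2)) :
    2 * s + 1 ∣ 1 := by
  have hnu : nu * (2 * s + 1) = 2 * s ^ 3 := by
    have h2s : 2 * s - 1 ≠ 0 := by omega
    apply mul_left_cancel₀ h2s
    linear_combination -hlink
  exact ⟨4 * s ^ 2 - 2 * s + 1 - 4 * nu, by linear_combination 4 * hnu⟩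

lemma four_mul_sq_le_of_design_eq {v k lam nu s : ℤ} (hv : 1 < v) (hs : 0 < s) (hkv : v < 2 * k)
    (hdesign : k * k = (k - lam) + lam * v) (hlink : k * k = nu * v + s * k)
    (hsq : k - lam = s ^ 2) : 4 * s ^ 2 ≤ v := by
  by_contra! hlt
  have hdisc := two_mul_sub_sq_of_design_eq hdesign
  rw [hsq] at hdisc
  have hle : (2 * k - v) ^ 2 ≤ 1 := by nlinarith
  have hone : 2 * k - v = 1 := by nlinarith
  have hv' : 4 * s ^ 2 = v + 1 := by
    apply mul_left_cancel₀ (show v - 1 ≠ 0 by omega)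
    rw [hone] at hdisc
    linear_combination hdisc
  obtain rfl : v = 4 * s ^ 2 - 1 := by linarith
  obtain rfl : k = 2 * s ^ 2 := by linarith
  have := Int.le_of_dvd one_pos (two_mul_add_one_dvd_one hlink)
  omega

theorem stmt_12 (v w k lam mu nu : ℕ) (hw : 3 ≤ w) (hmn : nu < mu)
    (hk1 : 1 < k) (hkv : k < v - 1)
    (B : Fin w → Fin w → Matrix (Fin v) (Fin v) ℝ)
    (hB : IsLSSD v w (k : ℝ) (lam : ℝ) (mu : ℝ) (nu : ℝ) B)
    (htight : ((w : ℤ) - 1) * (2 * (k : ℤ) - v) = ((v : ℤ) - 2) * ((mu : ℤ) - nu)) :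
    4 * ((k : ℤ) - lam) ≤ (v : ℤ) ∧ (v : ℤ) ≤ 2 * k := by
  obtain ⟨h, i, j, hhi, hhj, hij⟩ : ∃ h i j : Fin w, h ≠ i ∧ h ≠ j ∧ i ≠ j :=
    ⟨⟨0, by omega⟩, ⟨1, by omega⟩, ⟨2, by omega⟩, by simp, by simp, by simp⟩
  have hdesign : (k : ℤ) * k = (k - lam) + lam * v := by
    exact_mod_cast hB.design_eq hij (by omega)
  have hlink : (k : ℤ) * k = nu * v + (mu - nu) * k := by
    exact_mod_cast hB.linking_eq hhi hhj hij (by omega)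
  have hquartic : ((k : ℤ) - lam) ^ 2 = (mu - nu) ^ 2 * (k - lam) := by
    exact_mod_cast hB.sub_sq_eq hhi hhj hij (by omega)
  have hsq : (k : ℤ) - lam = (mu - nu) ^ 2 :=
    mul_right_cancel₀ (sub_ne_zero_of_design_eq (by omega) (by omega) hdesign)
      (by linear_combination hquartic)
  have hs : 0 < (mu : ℤ) - nu := by omega
  have hvk : (v : ℤ) < 2 * k := by
    by_contra! hle
    nlinarith [mul_pos (show (0 : ℤ) < v - 2 by omega) hs]
  exact ⟨hsq ▸ four_mul_sq_le_of_design_eq (by omega) hs hvk hdesign hlink hsq, hvk.le⟩
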